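/- arXiv:1607.06128 — 4 statements merged into one kernel-verified Lean document; each statement's English description precedes it below -/
import Mathlib

section
/- Let n ≥ 2 and let |x⟩ be a computational basis vector of (ℂ²)^{⊗n}. For nonzero real α, β, the tensor ψ = α|x⟩ + β|+⟩^{⊗n} has tensor rank exactly 2, i.e., it is not a product tensor. -/
/-- for `n ≥ 2`, a computational basis vector `|x⟩` of `(ℂ²)^{⊗n}`
and nonzero reals `α, β`, the tensor `ψ = α|x⟩ + β|+⟩^{⊗n}` is not a product
tensor, i.e. it has tensor rank exactly 2 (it is visibly a sum of two product
tensors). -/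
theorem grover_single_marked_not_product (n : ℕ) (hn : 2 ≤ n)
    (x : Fin n → Fin 2) (α β : ℝ) (hα : α ≠ 0) (hβ : β ≠ 0) :
    ¬ ∃ v : Fin n → (Fin 2 → ℂ),
      (fun y : Fin n → Fin 2 => (α : ℂ) * (if y = x then 1 else 0)
        + (β : ℂ) * ((1 / Real.sqrt 2 : ℝ) : ℂ) ^ n)
      = fun y => ∏ i, v i (y i) := by
  rintro ⟨v, h⟩
  have hpt : ∀ y : Fin n → Fin 2, (α : ℂ) * (if y = x then 1 else 0)
      + (β : ℂ) * ((1 / Real.sqrt 2 : ℝ) : ℂ) ^ n = ∏ i, v i (y i) :=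
    fun y => congrFun h y
  set c : ℂ := (β : ℂ) * ((1 / Real.sqrt 2 : ℝ) : ℂ) ^ n with hc
  have hs2 : Real.sqrt 2 ≠ 0 := ne_of_gt (Real.sqrt_pos.mpr (by norm_num))
  have hc0 : c ≠ 0 := by
    apply mul_ne_zero
    · exact_mod_cast hβ
    · apply pow_ne_zero
      rw [Complex.ofReal_ne_zero]
      exact one_div_ne_zero hs2
  set i0 : Fin n := ⟨0, by omega⟩ with hi0def
  set i1 : Fin n := ⟨1, by omega⟩ with hi1def
  have hne : i0 ≠ i1 := by simp [hi0def, hi1def, Fin.ext_iff]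
  have hflip : ∀ a : Fin 2, a + 1 ≠ a := by decide
  set y3 : Fin n → Fin 2 := Function.update x i0 (x i0 + 1) with hy3
  set y4 : Fin n → Fin 2 := Function.update x i1 (x i1 + 1) with hy4
  set y2 : Fin n → Fin 2 := Function.update y3 i1 (x i1 + 1) with hy2
  have hy3x : y3 ≠ x := by
    intro hEq
    have := congrFun hEq i0
    rw [hy3, Function.update_self] at this
    exact hflip _ this
  have hy4x : y4 ≠ x := by
    intro hEq
    have := congrFun hEq i1
    rw [hy4, Function.update_self] at this
    exact hflip _ this
  have hy2x : y2 ≠ x := by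
    intro hEq
    have := congrFun hEq i0
    rw [hy2, Function.update_of_ne hne, hy3, Function.update_self] at this
    exact hflip _ this
  have key : (∏ i, v i (x i)) * ∏ i, v i (y2 i) = (∏ i, v i (y3 i)) * ∏ i, v i (y4 i) := by
    rw [← Finset.prod_mul_distrib, ← Finset.prod_mul_distrib]
    apply Finset.prod_congr rfl
    intro i _
    rcases eq_or_ne i i0 with rfl | hi0
    · simp only [hy2, hy3, hy4, Function.update_apply, if_neg hne, if_pos rfl,
        if_neg (hne : ¬ i0 = i1)]
      ring
    rcases eq_or_ne i i1 with rfl | hi1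
    · simp only [hy2, hy3, hy4, Function.update_apply, if_pos rfl,
        if_neg (hne.symm : ¬ i1 = i0)]
    · simp only [hy2, hy3, hy4, Function.update_apply, if_neg hi0, if_neg hi1]
  have h1 := hpt x
  have h2 := hpt y2
  have h3 := hpt y3
  have h4 := hpt y4
  rw [if_pos rfl, mul_one] at h1
  rw [if_neg hy2x, mul_zero, zero_add] at h2
  rw [if_neg hy3x, mul_zero, zero_add] at h3
  rw [if_neg hy4x, mul_zero, zero_add] at h4
  rw [← h1, ← h2, ← h3, ← h4] at key
  have : (α : ℂ) + c = c := mul_right_cancel₀ hc0 key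
  have : (α : ℂ) = 0 := by linear_combination this
  exact hα (by exact_mod_cast this)
end

section
/- With sin θ = √(|S|/2^n) and θ ∈ (0, π/2), the Grover amplitudes satisfy the recursion: if ψ_k has marked amplitude sin θ_k/√|S| and unmarked amplitude cos θ_k/√(2^n−|S|) with θ_k = (2k+1)θ, then applying the Grover operator G (oracle then diffusion) yields the state with marked amplitude sin θ_{k+1}/√|S| and unmarked amplitude cos θ_{k+1}/√(2^n−|S|), where θ_{k+1} = θ_k + 2θ. -/
/-!
Write `N = |ι|`. The hypothesis on `θ` says `√|S| = √N sin θ` and `√(N - |S|) = √N cos θ`, so after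
the oracle the amplitudes of the state with angle `φ` sum to `√N cos (φ + θ)`. The diffusion
therefore sends each amplitude `a` to `2 cos (φ + θ) / √N - a`, and the identities
`sin (φ + 2θ) = sin φ + 2 sin θ cos (φ + θ)` and `cos (φ + 2θ) = 2 cos θ cos (φ + θ) - cos φ`
identify the result as the state with angle `φ + 2θ`.
-/
open Finset Real

theorem Real.sin_add_two_mul_eq (φ θ : ℝ) : sin (φ + 2 * θ) = sin φ + 2 * sin θ * cos (φ + θ) := by
  rw [sin_add, cos_add, sin_two_mul, cos_two_mul']
  linear_combination sin φ * sin_sq_add_cos_sq θ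

theorem Real.cos_add_two_mul_eq (φ θ : ℝ) : cos (φ + 2 * θ) = 2 * cos θ * cos (φ + θ) - cos φ := by
  rw [cos_add, cos_add, sin_two_mul, cos_two_mul']
  linear_combination -cos φ * sin_sq_add_cos_sq θ

theorem Fintype.sum_ite_mem_const {ι R : Type*} [Fintype ι] [DecidableEq ι] [Ring R]
    (S : Finset ι) (a b : R) :
    ∑ x, (if x ∈ S then a else b) = #S * a + (Fintype.card ι - #S : R) * b := by
  rw [sum_ite, filter_mem_eq_inter, univ_inter, filter_not, filter_mem_eq_inter, univ_inter,
    ← compl_eq_univ_sdiff]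
  simp [card_compl, Nat.cast_sub (card_le_univ S)]

theorem sq_mul_div_self {K : Type*} [Field K] (a b : K) : a ^ 2 * (b / a) = a * b := by
  rcases eq_or_ne a 0 with rfl | ha
  · simp
  · field_simp

namespace Grover

variable {ι : Type*} [Fintype ι]

noncomputable def diffusion (f : ι → ℝ) (x : ι) : ℝ :=
  2 * (∑ y, 1 / √(Fintype.card ι : ℝ) * f y) * (1 / √(Fintype.card ι : ℝ)) - f x

variable {S : Finset ι} {θ : ℝ}

theorem card_pos (hθ : θ ∈ Set.Ioo 0 (π / 2)) (hsin : sin θ = √((#S : ℝ) / Fintype.card ι)) :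
    (0 : ℝ) < Fintype.card ι := by
  rcases (Nat.cast_nonneg (Fintype.card ι) : (0 : ℝ) ≤ _).eq_or_lt with hN | hN
  · rw [← hN, div_zero, sqrt_zero] at hsin
    exact absurd hsin (sin_pos_of_mem_Ioo ⟨hθ.1, by linarith [hθ.2, pi_pos]⟩).ne'
  · exact hN

theorem sqrt_card_eq (hθ : θ ∈ Set.Ioo 0 (π / 2))
    (hsin : sin θ = √((#S : ℝ) / Fintype.card ι)) :
    √(#S : ℝ) = √(Fintype.card ι : ℝ) * sin θ ∧
      √((Fintype.card ι : ℝ) - #S) = √(Fintype.card ι : ℝ) * cos θ := by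
  have hN := card_pos hθ hsin
  have hcos : cos θ = √(((Fintype.card ι : ℝ) - #S) / Fintype.card ι) := by
    rw [cos_eq_sqrt_one_sub_sin_sq (by linarith [hθ.1, pi_pos]) hθ.2.le, hsin,
      sq_sqrt (by positivity), one_sub_div hN.ne']
  constructor
  · rw [hsin, sqrt_div' _ hN.le]; field_simp
  · rw [hcos, sqrt_div' _ hN.le]; field_simp

variable [DecidableEq ι] (S)

noncomputable def state (φ : ℝ) (x : ι) : ℝ :=
  if x ∈ S then sin φ / √(#S : ℝ) else cos φ / √((Fintype.card ι : ℝ) - #S)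

def oracle (f : ι → ℝ) (x : ι) : ℝ :=
  if x ∈ S then -f x else f x

variable {S}

theorem oracle_state (φ : ℝ) (x : ι) :
    oracle S (state S φ) x =
      if x ∈ S then -(sin φ / √(#S : ℝ)) else cos φ / √((Fintype.card ι : ℝ) - #S) := by
  unfold oracle state
  split_ifs <;> rfl

theorem sum_oracle_state {r : ℝ} (hM : √(#S : ℝ) = r * sin θ)
    (hC : √((Fintype.card ι : ℝ) - #S) = r * cos θ) (φ : ℝ) :
    ∑ x, oracle S (state S φ) x = r * cos (φ + θ) := by
  have hS : (#S : ℝ) = √(#S : ℝ) ^ 2 := (sq_sqrt (Nat.cast_nonneg _)).symm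
  have hSc : (Fintype.card ι : ℝ) - #S = √((Fintype.card ι : ℝ) - #S) ^ 2 :=
    (sq_sqrt (sub_nonneg.2 (mod_cast card_le_univ S))).symm
  simp_rw [oracle_state]
  rw [Fintype.sum_ite_mem_const]
  nth_rw 1 [hS, hSc]
  rw [mul_neg, sq_mul_div_self, sq_mul_div_self, hM, hC, cos_add]
  ring

theorem diffusion_oracle_state (hθ : θ ∈ Set.Ioo 0 (π / 2))
    (hsin : sin θ = √((#S : ℝ) / Fintype.card ι)) (φ : ℝ) :
    diffusion (oracle S (state S φ)) = state S (φ + 2 * θ) := by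
  obtain ⟨hM, hC⟩ := sqrt_card_eq hθ hsin
  have hs : sin θ ≠ 0 := (sin_pos_of_mem_Ioo ⟨hθ.1, by linarith [hθ.2, pi_pos]⟩).ne'
  have hc : cos θ ≠ 0 := (cos_pos_of_mem_Ioo ⟨by linarith [hθ.1, pi_pos], hθ.2⟩).ne'
  have hr : √(Fintype.card ι : ℝ) ≠ 0 := (sqrt_pos.2 (card_pos hθ hsin)).ne'
  ext x
  rw [diffusion, ← mul_sum, sum_oracle_state hM hC, oracle_state, state]
  split_ifs
  · rw [hM, sin_add_two_mul_eq]; field_simp; ring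
  · rw [hC, cos_add_two_mul_eq]; field_simp

end Grover

theorem grover_iteration_rotation_general (n : ℕ) (S : Finset (Fin (2 ^ n)))
    (θ : ℝ) (hθ : θ ∈ Set.Ioo 0 (Real.pi / 2))
    (hsin : Real.sin θ = Real.sqrt ((S.card : ℝ) / (2 ^ n : ℝ)))
    (θk : ℝ)
    (ψk Oψk Gψk : Fin (2 ^ n) → ℂ)
    (hψk : ∀ x, ψk x = if x ∈ S
      then ((Real.sin θk / Real.sqrt S.card : ℝ) : ℂ)
      else ((Real.cos θk / Real.sqrt ((2 ^ n : ℝ) - S.card) : ℝ) : ℂ))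
    (hO : ∀ x, Oψk x = if x ∈ S then -ψk x else ψk x)
    (hD : ∀ x, Gψk x =
      2 * (∑ y, (starRingEnd ℂ) ((1 / Real.sqrt (2 ^ n) : ℝ) : ℂ) * Oψk y)
        * ((1 / Real.sqrt (2 ^ n) : ℝ) : ℂ) - Oψk x) :
    ∀ x, Gψk x = if x ∈ S
      then ((Real.sin (θk + 2 * θ) / Real.sqrt S.card : ℝ) : ℂ)
      else ((Real.cos (θk + 2 * θ) / Real.sqrt ((2 ^ n : ℝ) - S.card) : ℝ) : ℂ) := by
  have hψ : ∀ x, ψk x = Grover.state S θk x := fun x ↦ by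
    rw [hψk, Grover.state]; split_ifs <;> simp
  have hOψ : ∀ x, Oψk x = Grover.oracle S (Grover.state S θk) x := fun x ↦ by
    rw [hO, Grover.oracle, hψ]; split_ifs <;> simp
  have hGψ : ∀ x, Gψk x = Grover.diffusion (Grover.oracle S (Grover.state S θk)) x := fun x ↦ by
    simp [hD, Grover.diffusion, hOψ]
  intro x
  rw [hGψ, Grover.diffusion_oracle_state hθ (by simpa using hsin), Grover.state]
  split_ifs <;> simp

/-- the Grover operator acts as a rotation by `2θ`. If `ψ_k` has
marked amplitude `sin θ_k/√|S|` and unmarked amplitude `cos θ_k/√(N−|S|)` with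
`θ_k = (2k+1)θ` and `sin θ = √(|S|/2^n)`, then applying the oracle followed by
the diffusion `D = 2|u⟩⟨u| − I` yields the state with angle `θ_{k+1} = θ_k + 2θ`. -/
theorem grover_iteration_rotation (n : ℕ) (S : Finset (Fin (2 ^ n)))
    (hS : S.Nonempty) (hScard : S.card < 2 ^ n)
    (θ : ℝ) (hθ : θ ∈ Set.Ioo 0 (Real.pi / 2))
    (hsin : Real.sin θ = Real.sqrt ((S.card : ℝ) / (2 ^ n : ℝ)))
    (k : ℕ) (θk : ℝ) (hθk : θk = (2 * k + 1) * θ)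
    (ψk Oψk Gψk : Fin (2 ^ n) → ℂ)
    (hψk : ∀ x, ψk x = if x ∈ S
      then ((Real.sin θk / Real.sqrt S.card : ℝ) : ℂ)
      else ((Real.cos θk / Real.sqrt ((2 ^ n : ℝ) - S.card) : ℝ) : ℂ))
    (hO : ∀ x, Oψk x = if x ∈ S then -ψk x else ψk x)
    (hD : ∀ x, Gψk x =
      2 * (∑ y, (starRingEnd ℂ) ((1 / Real.sqrt (2 ^ n) : ℝ) : ℂ) * Oψk y)
        * ((1 / Real.sqrt (2 ^ n) : ℝ) : ℂ) - Oψk x) :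
    ∀ x, Gψk x = if x ∈ S
      then ((Real.sin (θk + 2 * θ) / Real.sqrt S.card : ℝ) : ℂ)
      else ((Real.cos (θk + 2 * θ) / Real.sqrt ((2 ^ n : ℝ) - S.card) : ℝ) : ℂ) :=
  grover_iteration_rotation_general n S θ hθ hsin θk ψk Oψk Gψk hψk hO hD
end

section
/- The probability of measuring a marked element after k Grover iterations equals sin²((2k+1)θ) where sin θ = √(|S|/2^n); in particular this probability equals 1 if and only if (2k+1)θ is an odd multiple of π/2. -/
/-- the probability of measuring a marked element after `k` Grover
iterations equals `sin²((2k+1)θ)` where `sin θ = √(|S|/2^n)`; this probability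
equals `1` iff `(2k+1)θ` is an odd multiple of `π/2`. -/
theorem grover_success_probability (n : ℕ) (S : Finset (Fin (2 ^ n)))
    (hS : S.Nonempty) (hScard : S.card < 2 ^ n)
    (θ : ℝ) (hsin : Real.sin θ = Real.sqrt ((S.card : ℝ) / (2 ^ n : ℝ)))
    (k : ℕ) (ψk : Fin (2 ^ n) → ℂ)
    (hψk : ∀ x, ψk x = if x ∈ S
      then ((Real.sin ((2 * k + 1) * θ) / Real.sqrt S.card : ℝ) : ℂ)
      else ((Real.cos ((2 * k + 1) * θ) / Real.sqrt ((2 ^ n : ℝ) - S.card) : ℝ) : ℂ)) :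
    (∑ x ∈ S, ‖ψk x‖ ^ 2) = (Real.sin ((2 * k + 1) * θ)) ^ 2 ∧
    ((∑ x ∈ S, ‖ψk x‖ ^ 2) = 1 ↔
      ∃ m : ℤ, (2 * k + 1) * θ = (2 * m + 1) * (Real.pi / 2)) := by
  have hcard : (0 : ℝ) < S.card := by exact_mod_cast hS.card_pos
  have hmain : (∑ x ∈ S, ‖ψk x‖ ^ 2) = (Real.sin ((2 * k + 1) * θ)) ^ 2 := by
    have : ∀ x ∈ S, ‖ψk x‖ ^ 2
        = (Real.sin ((2 * k + 1) * θ)) ^ 2 / S.card := by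
      intro x hx
      rw [hψk x, if_pos hx, Complex.norm_real, Real.norm_eq_abs, sq_abs, div_pow,
        Real.sq_sqrt hcard.le]
    rw [Finset.sum_congr rfl this, Finset.sum_const, nsmul_eq_mul,
      mul_div_cancel₀ _ hcard.ne']
  refine ⟨hmain, ?_⟩
  rw [hmain]
  constructor
  · intro h
    have hcos : Real.cos ((2 * k + 1) * θ) = 0 := by
      have := Real.sin_sq_add_cos_sq ((2 * k + 1) * θ)
      nlinarith [sq_nonneg (Real.cos ((2 * k + 1) * θ))]
    obtain ⟨m, hm⟩ := Real.cos_eq_zero_iff.mp hcos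
    exact ⟨m, by linarith⟩
  · rintro ⟨m, hm⟩
    have hcos : Real.cos ((2 * k + 1) * θ) = 0 :=
      Real.cos_eq_zero_iff.mpr ⟨m, by linarith⟩
    have := Real.sin_sq_add_cos_sq ((2 * k + 1) * θ)
    nlinarith
end

section
/- Let u = |+⟩^{⊗n} ∈ (ℂ²)^{⊗n} be the uniform superposition and x₀ a computational basis state, n ≥ 2. For α, β ∈ ℝ not both zero, with ψ = α x₀ + β u: ψ is proportional to a product tensor if and only if α = 0 or β = 0 or n = 1 — i.e., for n ≥ 2 and α, β both nonzero, ψ is entangled. -/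
/-- for `n ≥ 2`, `x₀` a computational basis state of `(ℂ²)^{⊗n}`,
`u = |+⟩^{⊗n}` the uniform superposition, and real `α, β` not both zero, the
state `ψ = α x₀ + β u` is proportional to a product tensor iff `α = 0` or
`β = 0` or `n = 1`; in particular, for `α, β` both nonzero it is entangled. -/
theorem grover_secant_line_entangled (n : ℕ) (hn : 2 ≤ n)
    (x₀ : Fin n → Fin 2) (α β : ℝ) (hαβ : ¬ (α = 0 ∧ β = 0))
    (ψ : (Fin n → Fin 2) → ℂ)
    (hψ : ψ = fun y => (α : ℂ) * (if y = x₀ then 1 else 0)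
      + (β : ℂ) * ((1 / Real.sqrt 2 : ℝ) : ℂ) ^ n) :
    (∃ (c : ℂ) (v : Fin n → (Fin 2 → ℂ)), ψ = fun y => c * ∏ i, v i (y i)) ↔
      (α = 0 ∨ β = 0 ∨ n = 1) := by
  set s : ℂ := (β : ℂ) * ((1 / Real.sqrt 2 : ℝ) : ℂ) ^ n with hs
  constructor
  · rintro ⟨c, v, hprod⟩
    by_contra h
    push_neg at h
    obtain ⟨hα, hβ, -⟩ := h
    -- s ≠ 0
    have hsqrt : (Real.sqrt 2 : ℝ) ≠ 0 := by positivity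
    have hs0 : s ≠ 0 := by
      apply mul_ne_zero
      · exact_mod_cast hβ
      · apply pow_ne_zero
        simp [hsqrt]
    -- two distinct coordinates
    let i0 : Fin n := ⟨0, by omega⟩
    let i1 : Fin n := ⟨1, by omega⟩
    have hij : i0 ≠ i1 := by simp [i0, i1, Fin.ext_iff]
    have hflip : ∀ x : Fin 2, (if x = 0 then (1 : Fin 2) else 0) ≠ x := by decide
    set f0 : Fin 2 := if x₀ i0 = 0 then 1 else 0 with hf0
    set f1 : Fin 2 := if x₀ i1 = 0 then 1 else 0 with hf1
    have hf0ne : f0 ≠ x₀ i0 := hflip _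
    have hf1ne : f1 ≠ x₀ i1 := hflip _
    set y10 : Fin n → Fin 2 := fun i => if i = i0 then f0 else x₀ i with hy10
    set y01 : Fin n → Fin 2 := fun i => if i = i1 then f1 else x₀ i with hy01
    set y11 : Fin n → Fin 2 := fun i =>
      if i = i0 then f0 else if i = i1 then f1 else x₀ i with hy11
    have h10ne : y10 ≠ x₀ := by
      intro h; apply hf0ne; have := congrFun h i0; simpa [hy10] using this
    have h01ne : y01 ≠ x₀ := by
      intro h; apply hf1ne; have := congrFun h i1; simpa [hy01] using this
    have h11ne : y11 ≠ x₀ := by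
      intro h; apply hf0ne; have := congrFun h i0; simpa [hy11] using this
    -- values of ψ
    have hψx : ψ x₀ = (α : ℂ) + s := by simp [hψ, hs]
    have hψ10 : ψ y10 = s := by simp [hψ, hs, h10ne]
    have hψ01 : ψ y01 = s := by simp [hψ, hs, h01ne]
    have hψ11 : ψ y11 = s := by simp [hψ, hs, h11ne]
    -- rank-one relation
    have key : ψ x₀ * ψ y11 = ψ y10 * ψ y01 := by
      have hP : (∏ i, v i (x₀ i)) * (∏ i, v i (y11 i))
          = (∏ i, v i (y10 i)) * (∏ i, v i (y01 i)) := by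
        rw [← Finset.prod_mul_distrib, ← Finset.prod_mul_distrib]
        refine Finset.prod_congr rfl fun i _ => ?_
        have e10 : y10 i = if i = i0 then f0 else x₀ i := rfl
        have e01 : y01 i = if i = i1 then f1 else x₀ i := rfl
        have e11 : y11 i = if i = i0 then f0 else if i = i1 then f1 else x₀ i := rfl
        rw [e10, e01, e11]
        by_cases h0 : i = i0
        · have h1 : i ≠ i1 := fun hh => hij (h0 ▸ hh)
          rw [if_pos h0, if_pos h0, if_neg h1]
          exact mul_comm _ _
        · simp only [if_neg h0]
      rw [hprod]
      simp only
      rw [mul_mul_mul_comm, hP, mul_mul_mul_comm]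
    rw [hψx, hψ10, hψ01, hψ11] at key
    have : (α : ℂ) * s = 0 := by ring_nf at key ⊢; linear_combination key
    rcases mul_eq_zero.mp this with h | h
    · exact hα (by exact_mod_cast h)
    · exact hs0 h
  · rintro (hα | hβ | hn1)
    · refine ⟨s, fun _ _ => 1, ?_⟩
      subst hα
      funext y
      simp [hψ, hs]
    · refine ⟨(α : ℂ), fun i t => if t = x₀ i then 1 else 0, ?_⟩
      subst hβ
      funext y
      have : (∏ i, if y i = x₀ i then (1 : ℂ) else 0)
          = if y = x₀ then 1 else 0 := by
        by_cases h : y = x₀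
        · subst h; simp
        · rw [if_neg h]
          obtain ⟨i, hi⟩ := Function.ne_iff.mp h
          exact Finset.prod_eq_zero (Finset.mem_univ i) (by simp [hi])
      simp [hψ, hs, this]
    · omega
end
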